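/- Consider a strongly sup-regular ω-dimensional linear network error correction code on an acyclic network G, and a collection T of non-source nodes with C_T ≥ ω. Then the minimum distance at T satisfies d_min^{(T)}(G) ≤ C_T − ω + 1 (the extended Singleton bound). -/

import Mathlib

attribute [local instance] Classical.propDecidable

/-- One step along a channel not in the removed set `avoid`. -/
def Step {V E : Type*} (tail head : E → V) (avoid : Set E) (u v : V) : Prop :=
  ∃ e : E, e ∉ avoid ∧ tail e = u ∧ head e = v

/-- `v` is reachable from `u` after removing the channels in `avoid`. -/
def Reaches {V E : Type*} (tail head : E → V) (avoid : Set E) : V → V → Prop :=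
  Relation.ReflTransGen (Step tail head avoid)

/-- `C` is a cut between `s` and the collection of nodes `T`. -/
def IsCut {V E : Type*} (tail head : E → V) (s : V) (T : Set V) (C : Set E) : Prop :=
  ∀ t ∈ T, ¬ Reaches tail head C s t

/-- The minimum cut capacity between `s` and `T` (unit-capacity channels). -/
noncomputable def minCut {V E : Type*} [Fintype E] (tail head : E → V) (s : V)
    (T : Set V) : ℕ :=
  sInf {n : ℕ | ∃ C : Finset E, IsCut tail head s T (↑C) ∧ C.card = n}

/-- An `ω`-dimensional linear network error correction code on the network with
channels `E`, tail/head maps and source `s`: local encoding coefficients `ks` (from the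
`ω` imaginary message channels, nonzero only on channels leaving `s`) and `k` (between
adjacent pairs of channels), together with the extended global encoding kernels
`f e ∈ F^{ω + |E|}` satisfying the recursion
`f e = ∑_{d ∈ In(tail e)} k d e • f d + 1_e` (plus the message part at the source). -/
structure NECCode (F : Type*) [Field F] {V E : Type*} [Fintype E] [DecidableEq E]
    (tail head : E → V) (s : V) (ω : ℕ) where
  ks : Fin ω → E → F
  k : E → E → F
  f : E → (Fin ω ⊕ E → F)
  hks : ∀ i e, tail e ≠ s → ks i e = 0
  hk : ∀ d e, head d ≠ tail e → k d e = 0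
  hrec : ∀ e, f e = (∑ i, ks i e • (Pi.single (Sum.inl i) (1 : F) : Fin ω ⊕ E → F))
      + (∑ d, k d e • f d) + (Pi.single (Sum.inr e) (1 : F) : Fin ω ⊕ E → F)

variable {F : Type*} [Field F] {V E : Type*} [Fintype E] [DecidableEq E]
  {tail head : E → V} {s : V} {ω : ℕ}

/-- The message space `Φ(T)`: the span of the rows of the decoding matrix `F̃_T`
(whose columns are the kernels `f e`, `e ∈ In(T)`) indexed by the `ω` imaginary
message channels. -/
noncomputable def msgSpace (c : NECCode F tail head s ω) (T : Set V) :
    Submodule F ({e : E // head e ∈ T} → F) :=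
  Submodule.span F
    (Set.range fun i : Fin ω => fun e : {e : E // head e ∈ T} => c.f e.1 (Sum.inl i))

/-- The error space `Δ(T, ρ)` of an error pattern `ρ`: the span of the rows of the
decoding matrix indexed by the channels in `ρ`. -/
noncomputable def errSpace (c : NECCode F tail head s ω) (T : Set V) (ρ : Set E) :
    Submodule F ({e : E // head e ∈ T} → F) :=
  Submodule.span F
    ((fun d : E => fun e : {e : E // head e ∈ T} => c.f e.1 (Sum.inr d)) '' ρ)

/-- The minimum distance `d_min^{(T)} = min {|ρ| : Δ(T,ρ) ∩ Φ(T) ≠ {0}}`. -/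
noncomputable def dmin (c : NECCode F tail head s ω) (T : Set V) : ℕ :=
  sInf {n : ℕ | ∃ ρ : Finset E, errSpace c T ↑ρ ⊓ msgSpace c T ≠ ⊥ ∧ ρ.card = n}

/-- A code is strongly sup-regular if `dim Φ(T) = min(ω, C_T)` for every collection `T`
of non-source nodes. -/
def StronglySupRegular (c : NECCode F tail head s ω) : Prop :=
  ∀ T : Set V, s ∉ T → Module.finrank F (msgSpace c T) = min ω (minCut tail head s T)


set_option linter.unusedSectionVars false

section Aux

variable {F : Type*} [Field F] {V E : Type*} [Fintype E] [DecidableEq E]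
  {tail head : E → V} {s : V} {ω : ℕ}

/-- The channel-adjacency relation: `d` feeds into `e`. -/
def ChRel (tail head : E → V) (d e : E) : Prop := head d = tail e

lemma transGen_wf
    (hacyclic : ∀ v : V, ¬ Relation.TransGen (Step tail head (∅ : Set E)) v v) :
    WellFounded (Relation.TransGen (ChRel tail head)) := by
  haveI : IsTrans E (Relation.TransGen (ChRel tail head)) := ⟨fun _ _ _ => Relation.TransGen.trans⟩
  haveI : IsIrrefl E (Relation.TransGen (ChRel tail head)) := by
    constructor
    intro e he
    apply hacyclic (tail e)
    exact Relation.TransGen.lift tail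
      (fun a b (h : head a = tail b) => ⟨a, by simp, rfl, h⟩) e e he
  exact Finite.wellFounded_of_trans_of_irrefl _

lemma chRel_wf
    (hacyclic : ∀ v : V, ¬ Relation.TransGen (Step tail head (∅ : Set E)) v v) :
    WellFounded (ChRel tail head) :=
  Subrelation.wf (fun h => Relation.TransGen.single h) (transGen_wf hacyclic)

/-- The symbol carried by channel `e` when the message is `x` and errors `z` occur. -/
noncomputable def sym (c : NECCode F tail head s ω) (x : Fin ω → F) (z : E → F) (e : E) : F :=
  (∑ i, x i * c.f e (Sum.inl i)) + (∑ d, z d * c.f e (Sum.inr d))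

lemma f_inl (c : NECCode F tail head s ω) (e : E) (i : Fin ω) :
    c.f e (Sum.inl i) = c.ks i e + ∑ d, c.k d e * c.f d (Sum.inl i) := by
  conv_lhs => rw [c.hrec e]
  simp [Pi.single_apply, Finset.sum_ite_eq', mul_comm]

lemma f_inr (c : NECCode F tail head s ω) (e d0 : E) :
    c.f e (Sum.inr d0) = (∑ d, c.k d e * c.f d (Sum.inr d0)) + (if d0 = e then 1 else 0) := by
  conv_lhs => rw [c.hrec e]
  simp [Pi.single_apply]

lemma sym_rec (c : NECCode F tail head s ω) (x : Fin ω → F) (z : E → F) (e : E) :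
    sym c x z e = (∑ i, x i * c.ks i e) + (∑ d, c.k d e * sym c x z d) + z e := by
  have A : sym c x z e = (∑ i, x i * (c.ks i e + ∑ d, c.k d e * c.f d (Sum.inl i)))
      + ∑ d0, z d0 * ((∑ d, c.k d e * c.f d (Sum.inr d0)) + (if d0 = e then 1 else 0)) := by
    unfold sym
    congr 1
    · exact Finset.sum_congr rfl fun i _ => by rw [← f_inl]
    · exact Finset.sum_congr rfl fun d0 _ => by rw [← f_inr]
  rw [A]
  simp only [mul_add, Finset.mul_sum, Finset.sum_add_distrib]
  rw [Finset.sum_comm (f := fun (i : Fin ω) (d : E) => x i * (c.k d e * c.f d (Sum.inl i)))]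
  rw [Finset.sum_comm (f := fun (d0 : E) (d : E) => z d0 * (c.k d e * c.f d (Sum.inr d0)))]
  have h3 : ∑ d0, z d0 * (if d0 = e then (1:F) else 0) = z e := by
    simp [mul_ite, Finset.sum_ite_eq']
  rw [h3]
  have h4 : ∀ d : E, c.k d e * sym c x z d
      = (∑ i, x i * (c.k d e * c.f d (Sum.inl i)))
        + (∑ d0, z d0 * (c.k d e * c.f d (Sum.inr d0))) := by
    intro d
    unfold sym
    rw [mul_add, Finset.mul_sum, Finset.mul_sum]
    congr 1
    · exact Finset.sum_congr rfl fun i _ => by ring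
    · exact Finset.sum_congr rfl fun d0 _ => by ring
  simp only [h4]
  rw [Finset.sum_add_distrib]
  ring

lemma f_inr_support
    (hacyclic : ∀ v : V, ¬ Relation.TransGen (Step tail head (∅ : Set E)) v v)
    (c : NECCode F tail head s ω) :
    ∀ e d : E, c.f e (Sum.inr d) ≠ 0 → Relation.ReflTransGen (ChRel tail head) d e := by
  intro e
  induction e using (chRel_wf hacyclic).induction with
  | _ e IH =>
    intro d hne
    by_cases hde : d = e
    · subst hde; exact Relation.ReflTransGen.refl
    · rw [f_inr, if_neg hde, add_zero] at hne
      obtain ⟨d', -, hd'⟩ := Finset.exists_ne_zero_of_sum_ne_zero hne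
      have hk : c.k d' e ≠ 0 := fun h => hd' (by simp [h])
      have hrel : ChRel tail head d' e := by
        by_contra hrel; exact hk (c.hk d' e hrel)
      have hf : c.f d' (Sum.inr d) ≠ 0 := fun h => hd' (by simp [h])
      exact (IH d' hrel d hf).tail hrel

lemma f_inr_self
    (hacyclic : ∀ v : V, ¬ Relation.TransGen (Step tail head (∅ : Set E)) v v)
    (c : NECCode F tail head s ω) (e : E) :
    c.f e (Sum.inr e) = 1 := by
  rw [f_inr, if_pos rfl]
  have hz : ∑ d, c.k d e * c.f d (Sum.inr e) = 0 := by
    apply Finset.sum_eq_zero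
    intro d _
    by_cases hk : c.k d e = 0
    · simp [hk]
    · by_cases hf : c.f d (Sum.inr e) = 0
      · simp [hf]
      · exfalso
        have hrel : ChRel tail head d e := by
          by_contra hrel; exact hk (c.hk d e hrel)
        have htg : Relation.TransGen (ChRel tail head) e e :=
          Relation.TransGen.tail' (f_inr_support hacyclic c d e hf) hrel
        exact (transGen_wf hacyclic).asymmetric e e htg htg
  rw [hz, zero_add]

lemma sym_eq_on_downstream
    (hacyclic : ∀ v : V, ¬ Relation.TransGen (Step tail head (∅ : Set E)) v v)
    (c : NECCode F tail head s ω) (C : Set E)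
    (x x' : Fin ω → F) (z z' : E → F)
    (hz : ∀ d ∉ C, z d = 0) (hz' : ∀ d ∉ C, z' d = 0)
    (hCeq : ∀ d ∈ C, sym c x z d = sym c x' z' d) :
    ∀ e : E, (e ∈ C ∨ ¬ Reaches tail head C s (tail e)) →
      sym c x z e = sym c x' z' e := by
  intro e
  induction e using (chRel_wf hacyclic).induction with
  | _ e IH =>
    intro he
    by_cases heC : e ∈ C
    · exact hCeq e heC
    rcases he with he | he
    · exact absurd he heC
    have hts : tail e ≠ s := by
      intro h
      exact he (h ▸ Relation.ReflTransGen.refl)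
    rw [sym_rec, sym_rec]
    have hks : ∀ i, c.ks i e = 0 := fun i => c.hks i e hts
    simp only [hks, mul_zero, Finset.sum_const_zero, hz e heC, hz' e heC]
    congr 1
    congr 1
    apply Finset.sum_congr rfl
    intro d _
    by_cases hk : c.k d e = 0
    · simp [hk]
    have hrel : ChRel tail head d e := by
      by_contra hrel; exact hk (c.hk d e hrel)
    congr 1
    apply IH d hrel
    by_cases hdC : d ∈ C
    · exact Or.inl hdC
    · right
      intro hr
      exact he (hr.tail ⟨d, hdC, rfl, hrel⟩)

lemma exists_error_simulation
    (hacyclic : ∀ v : V, ¬ Relation.TransGen (Step tail head (∅ : Set E)) v v)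
    (c : NECCode F tail head s ω) (C : Finset E) (w : E → F) :
    ∃ z : E → F, (∀ d ∉ C, z d = 0) ∧
      ∀ d ∈ C, sym c (0 : Fin ω → F) z d = w d := by
  classical
  let L : ({d // d ∈ C} → F) →ₗ[F] ({d // d ∈ C} → F) :=
    { toFun := fun v d => ∑ d' : {d // d ∈ C}, v d' * c.f d.1 (Sum.inr d'.1)
      map_add' := by
        intro a b; funext d
        simp [add_mul, Finset.sum_add_distrib]
      map_smul' := by
        intro m a; funext d
        simp [Finset.mul_sum, mul_assoc] }
  have hinj : Function.Injective L := by
    rw [injective_iff_map_eq_zero]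
    intro v hv
    by_contra hvne
    have hsupp : {d : {d // d ∈ C} | v d ≠ 0}.Nonempty := by
      by_contra h
      apply hvne
      funext d
      by_contra hd
      exact h ⟨d, hd⟩
    obtain ⟨m, hm, hmin⟩ := (InvImage.wf (fun d : {d // d ∈ C} => d.1)
      (transGen_wf hacyclic)).has_min _ hsupp
    have hsum : ∑ d' : {d // d ∈ C}, v d' * c.f m.1 (Sum.inr d'.1) = v m := by
      rw [Finset.sum_eq_single m]
      · rw [f_inr_self hacyclic, mul_one]
      · intro d' _ hne
        by_cases hvd : v d' = 0
        · simp [hvd]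
        by_cases hf : c.f m.1 (Sum.inr d'.1) = 0
        · simp [hf]
        exfalso
        have hrt := f_inr_support hacyclic c m.1 d'.1 hf
        rcases Relation.reflTransGen_iff_eq_or_transGen.mp hrt with h | h
        · exact hne (Subtype.ext h.symm)
        · exact hmin d' hvd h
      · intro h; exact absurd (Finset.mem_univ m) h
    have h0 : ∑ d' : {d // d ∈ C}, v d' * c.f m.1 (Sum.inr d'.1) = 0 := congrFun hv m
    exact hm (by rw [← hsum]; exact h0)
  have hsurj : Function.Surjective L := (LinearMap.injective_iff_surjective).mp hinj
  obtain ⟨v, hv⟩ := hsurj (fun d => w d.1)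
  refine ⟨fun d => if h : d ∈ C then v ⟨d, h⟩ else 0, fun d hd => by simp [hd], ?_⟩
  intro d hd
  have h0 : (∑ d' : {d // d ∈ C}, v d' * c.f d (Sum.inr d'.1)) = w d := congrFun hv ⟨d, hd⟩
  have h1 : sym c (0 : Fin ω → F) (fun d => if h : d ∈ C then v ⟨d, h⟩ else 0) d
      = ∑ d' : {d // d ∈ C}, v d' * c.f d (Sum.inr d'.1) := by
    unfold sym
    rw [show (∑ i, (0 : Fin ω → F) i * c.f d (Sum.inl i)) = 0 by simp, zero_add]
    rw [← Finset.sum_subset (Finset.subset_univ C)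
      (f := fun d' => (if h : d' ∈ C then v ⟨d', h⟩ else 0) * c.f d (Sum.inr d'))
      (fun x _ hx => by simp [dif_neg hx])]
    rw [Finset.sum_subtype C (fun x => Iff.rfl)
      (fun d' => (if h : d' ∈ C then v ⟨d', h⟩ else 0) * c.f d (Sum.inr d'))]
    refine Finset.sum_congr rfl fun d' _ => ?_
    rw [dif_pos d'.2]
  rw [h1]
  exact h0

lemma msgSpace_le_errSpace
    (hacyclic : ∀ v : V, ¬ Relation.TransGen (Step tail head (∅ : Set E)) v v)
    (c : NECCode F tail head s ω) (T : Set V)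
    (C : Finset E) (hcut : IsCut tail head s T ↑C) :
    msgSpace c T ≤ errSpace c T ↑C := by
  rw [msgSpace]
  apply Submodule.span_le.2
  rintro _ ⟨i, rfl⟩
  show (fun e : {e : E // head e ∈ T} => c.f e.1 (Sum.inl i)) ∈ errSpace c T ↑C
  set x : Fin ω → F := Pi.single i 1 with hx
  obtain ⟨z, hz0, hzC⟩ := exists_error_simulation hacyclic c C (fun d => sym c x 0 d)
  have key : ∀ e : E, head e ∈ T → sym c x (0 : E → F) e = sym c 0 z e := by
    intro e heT
    apply sym_eq_on_downstream hacyclic c ↑C x 0 (0 : E → F) z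
      (fun d _ => rfl) (fun d hd => hz0 d (by simpa using hd))
    · intro d hd
      exact (hzC d (by simpa using hd)).symm
    · by_cases heC : e ∈ C
      · exact Or.inl (by simpa using heC)
      · right
        intro hr
        exact hcut (head e) heT (hr.tail ⟨e, by simpa using heC, rfl, rfl⟩)
  have hval : ∀ e : {e : E // head e ∈ T},
      c.f e.1 (Sum.inl i) = ∑ d ∈ C, z d * c.f e.1 (Sum.inr d) := by
    intro e
    have h1 : sym c x (0 : E → F) e.1 = c.f e.1 (Sum.inl i) := by
      unfold sym
      simp [hx, Pi.single_apply, ite_mul, Finset.sum_ite_eq']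
    have h2 : sym c 0 z e.1 = ∑ d ∈ C, z d * c.f e.1 (Sum.inr d) := by
      unfold sym
      rw [← Finset.sum_subset (Finset.subset_univ C)
        (f := fun d => z d * c.f e.1 (Sum.inr d))
        (fun d _ hd => by simp [hz0 d hd])]
      simp
    rw [← h1, key e.1 e.2, h2]
  have heq : (fun e : {e : E // head e ∈ T} => c.f e.1 (Sum.inl i))
      = ∑ d ∈ C, z d • (fun e : {e : E // head e ∈ T} => c.f e.1 (Sum.inr d)) := by
    funext e
    rw [hval e]
    simp [Finset.sum_apply]
  rw [heq]
  apply Submodule.sum_mem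
  intro d hd
  apply Submodule.smul_mem
  apply Submodule.subset_span
  exact ⟨d, by simpa using hd, rfl⟩

lemma exists_minCut (T : Set V) (hsT : s ∉ T) :
    ∃ C : Finset E, IsCut tail head s T ↑C ∧ C.card = minCut tail head s T := by
  have hne : {n : ℕ | ∃ C : Finset E, IsCut tail head s T (↑C) ∧ C.card = n}.Nonempty := by
    refine ⟨(Finset.univ : Finset E).card, Finset.univ, ?_, rfl⟩
    intro t ht hr
    have : s = t := by
      rcases (Relation.reflTransGen_iff_eq_or_transGen.mp hr) with h | h
      · exact h.symm
      · obtain ⟨b, -, e, he, -⟩ := Relation.TransGen.tail'_iff.mp h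
        exact absurd (by simp : e ∈ (↑(Finset.univ : Finset E) : Set E)) he
    exact hsT (this ▸ ht)
  obtain ⟨C, hcut, hcard⟩ := Nat.sInf_mem hne
  exact ⟨C, hcut, hcard⟩

end Aux

/-- **Extended Singleton bound.** For a strongly sup-regular `ω`-dimensional linear
network error correction code on a finite acyclic network and any collection `T` of
non-source nodes with `C_T ≥ ω`, the minimum distance at `T` satisfies
`d_min^{(T)} ≤ C_T − ω + 1`. -/
theorem stmt_11 {F : Type*} [Field F] {V E : Type*} [Fintype V] [Fintype E]
    [DecidableEq E] (tail head : E → V) (s : V) {ω : ℕ}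
    (hacyclic : ∀ v : V, ¬ Relation.TransGen (Step tail head (∅ : Set E)) v v)
    (c : NECCode F tail head s ω) (hreg : StronglySupRegular c)
    (T : Set V) (hT : T.Nonempty) (hsT : s ∉ T)
    (hC : ω ≤ minCut tail head s T) :
    dmin c T ≤ minCut tail head s T - ω + 1 := by
  classical
  by_cases hω : ω = 0
  · -- With `ω = 0` the message space is trivial and no error pattern qualifies.
    have hbotmsg : msgSpace c T = ⊥ := by
      subst hω
      rw [msgSpace]
      rw [Set.range_eq_empty _, Submodule.span_empty]
    have hd : dmin c T = 0 := by
      rw [dmin]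
      have hempty : {n : ℕ | ∃ ρ : Finset E,
          errSpace c T ↑ρ ⊓ msgSpace c T ≠ ⊥ ∧ ρ.card = n} = ∅ := by
        ext n
        simp only [Set.mem_setOf_eq, Set.mem_empty_iff_false, iff_false, not_exists]
        rintro ρ ⟨hne, -⟩
        exact hne (by rw [hbotmsg, inf_bot_eq])
      rw [hempty, Nat.sInf_empty]
    omega
  · have h1 : 1 ≤ ω := Nat.one_le_iff_ne_zero.mpr hω
    obtain ⟨C, hcut, hcard⟩ := exists_minCut (tail := tail) (head := head) (s := s) T hsT
    have hωm : ω ≤ C.card := by omega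
    obtain ⟨ρ, hρC, hρcard⟩ := Finset.exists_subset_card_eq
      (show C.card - ω + 1 ≤ C.card by omega)
    set g : E → ({e : E // head e ∈ T} → F) :=
      fun d : E => fun e : {e : E // head e ∈ T} => c.f e.1 (Sum.inr d) with hg
    have hmem : errSpace c T ↑ρ ⊓ msgSpace c T ≠ ⊥ := by
      intro hbot
      have hfin : Module.finrank F (msgSpace c T) = ω := by
        rw [hreg T hsT]
        exact min_eq_left hC
      have hle : msgSpace c T ≤ errSpace c T ↑C := msgSpace_le_errSpace hacyclic c T C hcut
      have hsplit : errSpace c T ↑C = errSpace c T ↑ρ ⊔ errSpace c T ↑(C \ ρ) := by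
        rw [errSpace, errSpace, errSpace, ← Submodule.span_union, ← Set.image_union]
        congr 2
        rw [← Finset.coe_union, Finset.union_sdiff_of_subset hρC]
      set A := errSpace c T ↑ρ with hA
      set B := msgSpace c T with hB
      set D := errSpace c T ↑(C \ ρ) with hD
      have hAB : Module.finrank F ↥(A ⊔ B) = Module.finrank F ↥A + ω := by
        have h := Submodule.finrank_sup_add_finrank_inf_eq A B
        rw [hbot] at h
        simp only [finrank_bot, add_zero] at h
        rw [h, hfin]
      have hup : A ⊔ B ≤ A ⊔ D := by
        apply sup_le le_sup_left
        calc B ≤ errSpace c T ↑C := hle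
          _ = A ⊔ D := hsplit
          _ ≤ A ⊔ D := le_rfl
      have hADle : Module.finrank F ↥(A ⊔ D) ≤ Module.finrank F ↥A + Module.finrank F ↥D := by
        have h := Submodule.finrank_sup_add_finrank_inf_eq A D
        omega
      have hDle : Module.finrank F ↥D ≤ ω - 1 := by
        have hcd : (C \ ρ).card = ω - 1 := by
          rw [Finset.card_sdiff_of_subset hρC]
          omega
        have himg : (g '' ↑(C \ ρ)) = ↑((C \ ρ).image g) := (Finset.coe_image).symm
        have hfr : Module.finrank F ↥D ≤ ((C \ ρ).image g).card := by
          rw [hD, errSpace, ← hg, himg]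
          exact finrank_span_finset_le_card _
        calc Module.finrank F ↥D ≤ ((C \ ρ).image g).card := hfr
          _ ≤ (C \ ρ).card := Finset.card_image_le
          _ = ω - 1 := hcd
      have hmono : Module.finrank F ↥(A ⊔ B) ≤ Module.finrank F ↥(A ⊔ D) :=
        Submodule.finrank_mono hup
      omega
    have hmem' : C.card - ω + 1 ∈ {n : ℕ | ∃ ρ : Finset E,
        errSpace c T ↑ρ ⊓ msgSpace c T ≠ ⊥ ∧ ρ.card = n} := ⟨ρ, hmem, hρcard⟩
    calc dmin c T ≤ C.card - ω + 1 := Nat.sInf_le hmem'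
      _ = minCut tail head s T - ω + 1 := by rw [hcard]
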